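/- arXiv:1605.07856 — 2 statements merged into one kernel-verified Lean document; each statement's English description precedes it below -/
import Mathlib

section
/- Let Π > 2 be a square-free integer and let p range over the prime divisors of Π. Then the sum of (log p)/p over all primes p dividing Π is at most log log Π + 2. -/
/-!
Split the prime factors of `N` at `L = log N`. Those above `L` contribute at most
`(∑ log p) / L ≤ log N / L = 1`. Those below `L` are controlled by the Chebyshev–Mertens estimate
`∑_{p ≤ n} log p / p ≤ log (n + 1) + log 2`, which comes from
`n ∑_{p ≤ n} log p / p ≤ ∑_{p ≤ n} (⌊n / p⌋ + 1) log p ≤ log n! + θ(n)`, Legendre's formula,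
`2ⁿ n! ≤ (n + 1)ⁿ` and Chebyshev's bound `θ(n) ≤ n log 4`. For `L ≥ 3` this is at most `log L + 1`,
and for `L < 3` the only prime below `L` is `2`.
-/

open Real Finset
open scoped Nat

namespace Nat

theorem two_pow_mul_factorial_le_succ_pow (n : ℕ) : 2 ^ n * n ! ≤ (n + 1) ^ n := by
  -- `(n!)² = ∏ (i + 1) (n - i)`, and each factor is at most `((n + 1) / 2)²` by AM-GM.
  have hsq : (2 ^ n * n !) ^ 2 ≤ ((n + 1) ^ n) ^ 2 :=
    calc (2 ^ n * n !) ^ 2 = ∏ i ∈ range n, 4 * ((i + 1) * (n - i)) := by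
          rw [prod_mul_distrib, prod_mul_distrib, prod_const, card_range,
            prod_range_add_one_eq_factorial, ← descFactorial_eq_prod_range, descFactorial_self,
            show 4 = 2 ^ 2 from rfl, ← pow_mul, mul_comm 2 n, pow_mul]
          ring
      _ ≤ ∏ _i ∈ range n, (n + 1) ^ 2 := by
          gcongr with i hi
          have : i + 1 + (n - i) = n + 1 := by have := mem_range.1 hi; omega
          rw [← mul_assoc, ← this]
          exact four_mul_le_sq_add _ _
      _ = ((n + 1) ^ n) ^ 2 := by rw [prod_const, card_range, ← pow_mul, ← pow_mul, mul_comm]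
  exact (Nat.pow_le_pow_iff_left two_ne_zero).1 hsq

theorem div_le_factorization_factorial {p : ℕ} (hp : p.Prime) (n : ℕ) :
    n / p ≤ (n !).factorization p := by
  rw [factorization_factorial hp (b := n + 2) ((log_le_self p n).trans_lt (by omega))]
  simpa using single_le_sum (f := fun i => n / p ^ i) (fun _ _ => Nat.zero_le _)
    (mem_Ico.2 ⟨le_rfl, by omega⟩ : 1 ∈ Ico 1 (n + 2))

theorem primeFactors_factorial_subset (n : ℕ) : (n !).primeFactors ⊆ primesLE n := fun _ hp =>
  mem_primesLE.2 ⟨(prime_of_mem_primeFactors hp).dvd_factorial.1 (dvd_of_mem_primeFactors hp),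
    prime_of_mem_primeFactors hp⟩

end Nat

namespace Real

theorem log_factorial_le (n : ℕ) : log (n ! : ℕ) ≤ n * (log (n + 1) - log 2) := by
  have h : ((2 ^ n * n ! : ℕ) : ℝ) ≤ ((n + 1) ^ n : ℕ) := by
    exact_mod_cast Nat.two_pow_mul_factorial_le_succ_pow n
  push_cast at h
  have := log_le_log (by positivity) h
  rw [log_mul (by positivity) (by positivity), log_pow, log_pow] at this
  linarith

theorem log_factorial_eq_sum_primesLE (n : ℕ) :
    log (n ! : ℕ) = ∑ p ∈ Nat.primesLE n, (n !).factorization p * log p := by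
  rw [log_nat_eq_sum_factorization,
    Finsupp.sum_of_support_subset _ (Nat.primeFactors_factorial_subset n)]
  simp

end Real

theorem sum_primesLE_div_mul_log_le_log_factorial (n : ℕ) :
    ∑ p ∈ Nat.primesLE n, ((n / p : ℕ) : ℝ) * log p ≤ log (n ! : ℕ) := by
  rw [log_factorial_eq_sum_primesLE]
  gcongr with p hp
  exact Nat.div_le_factorization_factorial (Nat.prime_of_mem_primesLE hp) n

theorem sum_primesLE_log_div_le (n : ℕ) :
    ∑ p ∈ Nat.primesLE n, log p / p ≤ log (n + 1) + log 2 := by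
  rcases Nat.eq_zero_or_pos n with rfl | hn
  · simp only [Nat.primesLE_zero, sum_empty, CharP.cast_eq_zero, zero_add, log_one]
    positivity
  have hn' : (0 : ℝ) < n := by exact_mod_cast hn
  refine le_of_mul_le_mul_left ?_ hn'
  have htheta : ∑ p ∈ Nat.primesLE n, log p ≤ n * (2 * log 2) := by
    rw [← Chebyshev.theta_eq_sum_primesLE_log, mul_comm, ← log_rpow two_pos]
    convert Chebyshev.theta_le_log4_mul_x hn'.le using 3
    norm_num
  calc n * ∑ p ∈ Nat.primesLE n, log p / p
      = ∑ p ∈ Nat.primesLE n, (n : ℝ) / p * log p := by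
        rw [mul_sum]; exact sum_congr rfl fun p _ => by ring
    _ ≤ ∑ p ∈ Nat.primesLE n, (((n / p : ℕ) : ℝ) + 1) * log p := by
        gcongr with p
        exact Nat.floor_div_eq_div (K := ℝ) n p ▸ (Nat.lt_floor_add_one _).le
    _ = ∑ p ∈ Nat.primesLE n, ((n / p : ℕ) : ℝ) * log p + ∑ p ∈ Nat.primesLE n, log p := by
        simp only [add_mul, one_mul, sum_add_distrib]
    _ ≤ n * (log (n + 1) - log 2) + n * (2 * log 2) :=
        add_le_add ((sum_primesLE_div_mul_log_le_log_factorial n).trans (log_factorial_le n))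
          htheta
    _ = n * (log (n + 1) + log 2) := by ring

theorem sum_primesLE_floor_log_div_le {x : ℝ} (hx : 1 ≤ x) :
    ∑ p ∈ Nat.primesLE ⌊x⌋₊, log p / p ≤ log x + 1 := by
  rcases lt_or_ge x 3 with hx3 | hx3
  · have hsub : Nat.primesLE ⌊x⌋₊ ⊆ {2} := fun p hp => by
      have hfloor : ⌊x⌋₊ < 3 := (Nat.floor_lt (by linarith)).2 (by exact_mod_cast hx3)
      have hp3 : p < 3 := (Nat.le_of_mem_primesLE hp).trans_lt hfloor
      have := Nat.two_le_of_mem_primesLE hp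
      rw [mem_singleton]
      omega
    calc _ ≤ ∑ p ∈ ({2} : Finset ℕ), log p / p :=
          sum_le_sum_of_subset_of_nonneg hsub fun _ _ _ => by positivity
      _ ≤ log x + 1 := by
          rw [sum_singleton]
          have := log_two_lt_d9
          have := log_nonneg hx
          push_cast
          linarith
  · have hfloor := Nat.floor_le (by linarith : 0 ≤ x)
    -- `2 (x + 1) ≤ e x` as soon as `x ≥ 3`, since `e > 2 + 2 / 3`.
    calc _ ≤ log (⌊x⌋₊ + 1) + log 2 := sum_primesLE_log_div_le _
      _ = log (2 * (⌊x⌋₊ + 1)) := by rw [log_mul two_ne_zero (by positivity), add_comm]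
      _ ≤ log (exp 1 * x) := log_le_log (by positivity) (by nlinarith [exp_one_gt_d9])
      _ = log x + 1 := by rw [log_mul (exp_pos 1).ne' (by positivity), log_exp, add_comm]

theorem sum_filter_lt_log_div_le (s : Finset ℕ) {L : ℝ} (hL : 0 < L) :
    ∑ p ∈ s.filter fun p : ℕ => L < p, log p / p ≤ (∑ p ∈ s, log p) / L := by
  rw [sum_div]
  calc _ ≤ ∑ p ∈ s.filter fun p : ℕ => L < p, log p / L :=
        sum_le_sum fun p hp =>
          div_le_div_of_nonneg_left (log_natCast_nonneg p) hL (mem_filter.1 hp).2.le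
    _ ≤ _ := sum_le_sum_of_subset_of_nonneg (filter_subset _ _) fun p _ _ => by positivity

theorem sum_primeFactors_log_le_log (n : ℕ) : ∑ p ∈ n.primeFactors, log p ≤ log n := by
  rcases eq_or_ne n 0 with rfl | hn
  · simp
  rw [← log_prod fun p hp => by exact_mod_cast (Nat.prime_of_mem_primeFactors hp).ne_zero,
    ← Nat.cast_prod]
  refine log_le_log ?_ ?_
  · exact_mod_cast prod_pos fun p hp => (Nat.prime_of_mem_primeFactors hp).pos
  · exact_mod_cast Nat.le_of_dvd (Nat.pos_of_ne_zero hn) (Nat.prod_primeFactors_dvd n)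

theorem sum_log_div_self_le_general (N : ℕ) (hN : 2 < N) :
    ∑ p ∈ N.primeFactors, Real.log p / p ≤ Real.log (Real.log N) + 2 := by
  set L := log N
  have hL : 1 ≤ L := by
    rw [le_log_iff_exp_le (by positivity)]
    have : (3 : ℝ) ≤ N := by exact_mod_cast hN
    linarith [exp_one_lt_d9]
  have hsmall : ∑ p ∈ N.primeFactors.filter fun p : ℕ => p ≤ L, log p / p ≤ log L + 1 := by
    refine (sum_le_sum_of_subset_of_nonneg (fun p hp => ?_) fun p _ _ => by positivity).trans
      (sum_primesLE_floor_log_div_le hL)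
    obtain ⟨hpN, hpL⟩ := mem_filter.1 hp
    exact Nat.mem_primesLE.2 ⟨Nat.le_floor hpL, Nat.prime_of_mem_primeFactors hpN⟩
  have hlarge : ∑ p ∈ N.primeFactors.filter fun p : ℕ => ¬p ≤ L, log p / p ≤ 1 := by
    simp_rw [not_le]
    refine (sum_filter_lt_log_div_le _ (by linarith)).trans ?_
    rw [div_le_one (by linarith)]
    exact sum_primeFactors_log_le_log N
  rw [← sum_filter_add_sum_filter_not N.primeFactors (fun p : ℕ => (p : ℝ) ≤ L)]
  linarith

theorem sum_log_div_self_le (N : ℕ) (hN : 2 < N) (hsf : Squarefree N) :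
    ∑ p ∈ N.primeFactors, Real.log p / p ≤ Real.log (Real.log N) + 2 :=
  sum_log_div_self_le_general N hN
end

section
/- For any integer Π > 1 and any positive integer l ≤ Π, the sum over prime divisors p of Π of (log p)/p is at most log l + (1/l)·log Π. -/
/-!
Write `log p / p = log p * (1/p - 1/l) + (log p) / l`. The second parts sum to at most
`(log N) / l`, since the primes dividing `N` have product at most `N`. In the first parts,
`l * (1/p - 1/l) = l/p - 1 ≤ ⌊l/p⌋` and `⌊l/p⌋` is at most the exponent of `p` in `l!`
(Legendre), so they sum to at most `(log l!) / l ≤ log l`.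
-/

open Real Finset
open scoped Nat

namespace Real

theorem sum_factorization_mul_log_le (n : ℕ) (S : Finset ℕ) :
    ∑ p ∈ S, (n.factorization p : ℝ) * log p ≤ log n := by
  calc ∑ p ∈ S, (n.factorization p : ℝ) * log p
      = ∑ p ∈ S ∩ n.primeFactors, (n.factorization p : ℝ) * log p := by
        refine (sum_subset inter_subset_left fun p hpS hp => ?_).symm
        rw [← Nat.support_factorization, mem_inter, Finsupp.mem_support_iff] at hp
        simp_all
    _ ≤ ∑ p ∈ n.primeFactors, (n.factorization p : ℝ) * log p :=
        sum_le_sum_of_subset_of_nonneg inter_subset_right fun p _ _ => by positivity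
    _ = log n := by
        rw [log_nat_eq_sum_factorization, Finsupp.sum, Nat.support_factorization]

theorem sum_log_primeFactors_le (n : ℕ) : ∑ p ∈ n.primeFactors, log p ≤ log n := by
  refine le_trans (sum_le_sum fun p hp => ?_) (sum_factorization_mul_log_le n n.primeFactors)
  have hpos : 1 ≤ n.factorization p := by
    rw [← Nat.support_factorization, Finsupp.mem_support_iff] at hp
    omega
  exact le_mul_of_one_le_left (log_natCast_nonneg p) (by exact_mod_cast hpos)

theorem sum_div_mul_log_le_log_factorial (n : ℕ) {S : Finset ℕ} (hS : ∀ p ∈ S, p.Prime) :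
    ∑ p ∈ S, ((n / p : ℕ) : ℝ) * log p ≤ log n ! := by
  refine le_trans (sum_le_sum fun p hp => ?_) (sum_factorization_mul_log_le n ! S)
  gcongr
  exact_mod_cast Nat.div_le_factorization_factorial (hS p hp) n

theorem log_factorial_le_mul_log (n : ℕ) : log n ! ≤ n * log n := by
  rw [← log_pow]
  exact log_le_log (by positivity) (by exact_mod_cast Nat.factorial_le_pow n)

theorem log_mul_inv_sub_inv_le {l : ℕ} (hl : 0 < l) (p : ℕ) :
    log p * ((p : ℝ)⁻¹ - (l : ℝ)⁻¹) ≤ (l : ℝ)⁻¹ * (((l / p : ℕ) : ℝ) * log p) := by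
  have hl' : (0 : ℝ) < l := by exact_mod_cast hl
  have hfloor : (l : ℝ) / p - 1 ≤ ((l / p : ℕ) : ℝ) := by
    rw [← Nat.floor_div_eq_div (K := ℝ)]
    exact (Nat.sub_one_lt_floor _).le
  calc log p * ((p : ℝ)⁻¹ - (l : ℝ)⁻¹) = (l : ℝ)⁻¹ * (((l : ℝ) / p - 1) * log p) := by
        field_simp
    _ ≤ (l : ℝ)⁻¹ * (((l / p : ℕ) : ℝ) * log p) := by
        gcongr

theorem sum_log_mul_inv_sub_inv_le_log {l : ℕ} (hl : 0 < l) {S : Finset ℕ}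
    (hS : ∀ p ∈ S, p.Prime) : ∑ p ∈ S, log p * ((p : ℝ)⁻¹ - (l : ℝ)⁻¹) ≤ log l := by
  have hl' : (0 : ℝ) < l := by exact_mod_cast hl
  calc ∑ p ∈ S, log p * ((p : ℝ)⁻¹ - (l : ℝ)⁻¹)
      ≤ (l : ℝ)⁻¹ * ∑ p ∈ S, ((l / p : ℕ) : ℝ) * log p := by
        rw [mul_sum]
        exact sum_le_sum fun p _ => log_mul_inv_sub_inv_le hl p
    _ ≤ (l : ℝ)⁻¹ * (l * log l) := by
        gcongr
        exact (sum_div_mul_log_le_log_factorial l hS).trans (log_factorial_le_mul_log l)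
    _ = log l := by field_simp

end Real

theorem sum_log_div_self_le_log_add_general (N l : ℕ) (hl : 0 < l) :
    ∑ p ∈ N.primeFactors, Real.log p / p ≤
      Real.log l + (1 / (l : ℝ)) * Real.log N := by
  have hsplit : ∀ p ∈ N.primeFactors,
      Real.log p / p = Real.log p * ((p : ℝ)⁻¹ - (l : ℝ)⁻¹) + (l : ℝ)⁻¹ * Real.log p :=
    fun p _ => by ring
  rw [sum_congr rfl hsplit, sum_add_distrib, ← mul_sum, one_div]
  gcongr
  · exact Real.sum_log_mul_inv_sub_inv_le_log hl fun p => Nat.prime_of_mem_primeFactors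
  · exact Real.sum_log_primeFactors_le N

theorem sum_log_div_self_le_log_add (N l : ℕ) (hN : 1 < N) (hl : 0 < l) (hlN : l ≤ N) :
    ∑ p ∈ N.primeFactors, Real.log p / p ≤
      Real.log l + (1 / (l : ℝ)) * Real.log N :=
  sum_log_div_self_le_log_add_general N l hl
end
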